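/- Assume the TIN-optimality condition (O1). Fix cells i ≠ j and l_i ∈ {1,…,L_i}, and partition {1,…,l_i} into ⟨l_i⟩''_j = {s ∈ {1,…,l_i−1} : α_{ii}^{[l_i]} − α_{ij}^{[l_i]} ≥ α_{ii}^{[s]}} and ⟨l_i⟩'_j = {1,…,l_i} \ ⟨l_i⟩''_j. Then for all s', l' ∈ ⟨l_i⟩'_j with s' < l': α_{ii}^{[l']} − α_{ij}^{[l']} ≥ α_{ii}^{[s']} − α_{ij}^{[s']} + α_{ij}^{[l']}. -/

import Mathlib

/-!
Write `a_s = α_{ii}^{[s]}` and `b_s = α_{ij}^{[s]}`. For `s < l`, (O1) reads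
`a_s + min(b_l, 2 b_l - b_s) ≤ a_l`, and the claim for `s' < l'` is this inequality with the
minimum replaced by its second argument. That replacement is legitimate as soon as
`a_{l'} < a_{s'} + b_{l'}`. For `l' = l_i` this is membership of `s'` in the strong group;
for `l' < l_i` the same resolution applied to the pair `(l', l_i)` gives
`a_{l'} + 2 b_{l_i} - b_{l'} ≤ a_{l_i}`, which together with `a_{l_i} - b_{l_i} < a_{s'}` and
`b_{l_i} ≥ 0` yields it.
-/

theorem add_le_of_add_min_le_of_lt {G : Type*} [AddCommGroup G] [LinearOrder G]
    [IsOrderedAddMonoid G] {a b c d : G} (h : a + min b c ≤ d) (hd : d < a + b) :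
    a + c ≤ d := by
  have hmin : min b c < b := lt_of_add_lt_add_left (h.trans_lt hd)
  rwa [min_eq_right ((min_lt_iff.mp hmin).resolve_left (lt_irrefl b)).le] at h

theorem partition_inequality_general_general {K : ℕ}
    (L : Fin K → ℕ)
    (α : (k : Fin K) → Fin (L k) → Fin K → ℝ)
    (hα : ∀ (k : Fin K) (l : Fin (L k)) (i : Fin K), 0 ≤ α k l i)
    (hO1 : ∀ (i j : Fin K), j ≠ i → ∀ (l' l : Fin (L i)), l' < l →
      α i l' i + min (α i l j) (2 * α i l j - α i l' j) ≤ α i l i)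
    (i j : Fin K) (hij : i ≠ j)
    (li s' l' : Fin (L i))
    (hsl : s' < l') (hlli : l' ≤ li)
    (hs'mem : α i li i - α i li j < α i s' i)
    (hl'mem : l' = li ∨ α i li i - α i li j < α i l' i) :
    α i s' i - α i s' j + α i l' j ≤ α i l' i - α i l' j := by
  have hO1ij := hO1 i j hij.symm
  have hstrong : α i l' i < α i s' i + α i l' j := by
    rcases hlli.lt_or_eq with hlt | rfl
    · have hl' := hl'mem.resolve_left hlt.ne
      have := add_le_of_add_min_le_of_lt (hO1ij l' li hlt) (by linarith)
      linarith [hα i li j]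
    · linarith
  linarith [add_le_of_add_min_le_of_lt (hO1ij s' l' hsl) hstrong]

/-- **Equation (102) in the proof of Lemma 5 of the paper (generalized partition
inequality).** Assume (O1) and fix cells `i ≠ j` and `l_i`. Partition `{1,…,l_i}` into
the weak group `⟨l_i⟩''_j = {s < l_i : α_{ii}^{[l_i]} − α_{ij}^{[l_i]} ≥ α_{ii}^{[s]}}`
and its complement `⟨l_i⟩'_j` (which contains `l_i`). Then for all `s' < l'` both in
`⟨l_i⟩'_j`: `α_{ii}^{[l']} − α_{ij}^{[l']} ≥ α_{ii}^{[s']} − α_{ij}^{[s']} + α_{ij}^{[l']}`. -/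
theorem partition_inequality_general {K : ℕ} (hK : 2 ≤ K)
    (L : Fin K → ℕ) (hL : ∀ k, 1 ≤ L k)
    (α : (k : Fin K) → Fin (L k) → Fin K → ℝ)
    (hα : ∀ (k : Fin K) (l : Fin (L k)) (i : Fin K), 0 ≤ α k l i)
    (hmono : ∀ k : Fin K, Monotone (fun l : Fin (L k) => α k l k))
    (hO1 : ∀ (i j : Fin K), j ≠ i → ∀ (l' l : Fin (L i)), l' < l →
      α i l' i + min (α i l j) (2 * α i l j - α i l' j) ≤ α i l i)
    (i j : Fin K) (hij : i ≠ j)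
    (li s' l' : Fin (L i))
    (hsl : s' < l') (hlli : l' ≤ li)
    (hs'mem : α i li i - α i li j < α i s' i)
    (hl'mem : l' = li ∨ α i li i - α i li j < α i l' i) :
    α i s' i - α i s' j + α i l' j ≤ α i l' i - α i l' j :=
  partition_inequality_general_general L α hα hO1 i j hij li s' l' hsl hlli hs'mem hl'mem
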